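/- arXiv:1601.03855 — 3 statements merged into one kernel-verified Lean document; each statement's English description precedes it below -/
import Mathlib

section
/- For all real x ≤ 1 (including negative x), e^x ≤ 1 + x + (e - 2)·x² holds. -/
open Real Nat

lemma exp_tsum (y : ℝ) : Real.exp y = ∑' n : ℕ, y ^ n / n ! := by
  rw [Real.exp_eq_exp_ℝ, NormedSpace.exp_eq_tsum_div]

lemma aux_pos (x : ℝ) (h0 : 0 ≤ x) (h1 : x ≤ 1) :
    Real.exp x ≤ 1 + x + (Real.exp 1 - 2) * x ^ 2 := by
  have hs : ∀ y : ℝ, Summable (fun n : ℕ => y ^ n / n !) :=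
    fun y => Real.summable_pow_div_factorial y
  have hs2 : ∀ y : ℝ, Summable (fun n : ℕ => y ^ (n + 2) / (n + 2)!) :=
    fun y => (summable_nat_add_iff 2).2 (hs y)
  have split : ∀ y : ℝ, Real.exp y = 1 + y + ∑' n : ℕ, y ^ (n + 2) / (n + 2)! := by
    intro y
    rw [exp_tsum y, ← Summable.sum_add_tsum_nat_add 2 (hs y)]
    simp [Finset.sum_range_succ]
  have key : (∑' n : ℕ, x ^ (n + 2) / (n + 2)!) ≤ x ^ 2 * ∑' n : ℕ, (1:ℝ) ^ (n + 2) / (n + 2)! := by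
    rw [← tsum_mul_left]
    refine Summable.tsum_le_tsum (fun n => ?_) (hs2 x) ((hs2 1).mul_left _)
    have hxn : x ^ n ≤ 1 := pow_le_one₀ h0 h1
    have : x ^ (n + 2) ≤ x ^ 2 := by
      calc x ^ (n + 2) = x ^ n * x ^ 2 := by ring
        _ ≤ 1 * x ^ 2 := by
            exact mul_le_mul_of_nonneg_right hxn (sq_nonneg x)
        _ = x ^ 2 := one_mul _
    have hfac : (0:ℝ) < (n + 2)! := by positivity
    rw [one_pow, mul_one_div]
    exact div_le_div_of_nonneg_right this hfac.le
  have h1' := split 1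
  have hx' := split x
  have : (∑' n : ℕ, (1:ℝ) ^ (n + 2) / (n + 2)!) = Real.exp 1 - 2 := by
    rw [h1']; ring_nf
  rw [hx']
  nlinarith [key, this]

theorem exp_le_one_add_add_sq (x : ℝ) (hx : x ≤ 1) :
    Real.exp x ≤ 1 + x + (Real.exp 1 - 2) * x ^ 2 := by
  rcases le_or_gt 0 x with h0 | h0
  · exact aux_pos x h0 hx
  · have hy : 0 ≤ -x := by linarith
    have hq : 1 + (-x) + (-x) ^ 2 / 2 ≤ Real.exp (-x) := Real.quadratic_le_exp_of_nonneg hy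
    have hpos : (0:ℝ) < 1 + (-x) + (-x) ^ 2 / 2 := by nlinarith
    have hinv : Real.exp x ≤ (1 + (-x) + (-x) ^ 2 / 2)⁻¹ := by
      have hxe : Real.exp x = (Real.exp (-x))⁻¹ := by
        rw [← Real.exp_neg, neg_neg]
      rw [hxe]
      exact inv_anti₀ hpos hq
    have hc : (1:ℝ)/2 ≤ Real.exp 1 - 2 := by
      have := Real.exp_one_gt_d9; linarith
    have htarget : (1 + (-x) + (-x) ^ 2 / 2)⁻¹ ≤ 1 + x + (Real.exp 1 - 2) * x ^ 2 := by
      rw [inv_le_iff_one_le_mul₀ hpos]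
      nlinarith [sq_nonneg x, hc, mul_nonneg (mul_nonneg hy hy) hy,
        mul_nonneg (mul_nonneg (mul_nonneg hy hy) hy) hy]
    linarith
end

section
/- With the setting of the previous lemma and ψ the identity, E_{(a,b)∼p⊗p}[ĉ_i(a,b)] = x i - ∑_j p j · x j, i.e., the expectation of the estimator ĉ_i equals the expected instantaneous regret of the sampling distribution p against arm i. -/
/-! The importance weight `1 / p a` of each half of `ĉ_i` cancels the probability `p a` of
drawing `a`, so each half contributes `(x i - ∑ j, p j * x j) / 2`; the second half reduces
to the first by swapping `a` and `b`. -/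

open Finset

section
variable {ι 𝕜 : Type*} [Fintype ι]

theorem sum_mul_sub_eq_sub_sum_mul [CommRing 𝕜] {p : ι → 𝕜} (hps : ∑ j, p j = 1)
    (x : ι → 𝕜) (t : 𝕜) :
    ∑ b, p b * (t - x b) = t - ∑ j, p j * x j := by
  simp only [mul_sub, sum_sub_distrib, ← sum_mul, hps, one_mul]

theorem sum_sum_mul_ite_div_eq [DecidableEq ι] [Field 𝕜] {p : ι → 𝕜} {i : ι} (hpi : p i ≠ 0)
    (hps : ∑ j, p j = 1) (x : ι → 𝕜) :
    ∑ a, ∑ b, p a * p b * ((if i = a then (1 : 𝕜) else 0) * (x a - x b) / (2 * p a))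
      = (x i - ∑ j, p j * x j) / 2 := by
  have hsummand : ∀ a b,
      p a * p b * ((if i = a then (1 : 𝕜) else 0) * (x a - x b) / (2 * p a))
        = if i = a then p b * (x i - x b) / 2 else 0 := by
    intro a b
    split_ifs with h
    · subst h
      field_simp
    · simp
  simp only [hsummand, sum_ite_irrel, sum_const_zero, sum_ite_eq, mem_univ, if_true, ← sum_div,
    sum_mul_sub_eq_sub_sum_mul hps]

end

theorem expectation_chat_identity_general (K : ℕ)
    (p : Fin K → ℝ) (hp : ∀ i, 0 < p i) (hps : ∑ i, p i = 1)
    (x : Fin K → ℝ)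
    (c : Fin K → Fin K → Fin K → ℝ)
    (hc : ∀ i a b, c i a b = (if i = a then (1:ℝ) else 0) * (x a - x b) / (2 * p a)
                          + (if i = b then (1:ℝ) else 0) * (x b - x a) / (2 * p b))
    (i : Fin K) :
    ∑ a, ∑ b, p a * p b * c i a b = x i - ∑ j, p j * x j := by
  have half := sum_sum_mul_ite_div_eq (hp i).ne' hps x
  have swapped : ∑ a, ∑ b, p a * p b *
      ((if i = b then (1 : ℝ) else 0) * (x b - x a) / (2 * p b)) = (x i - ∑ j, p j * x j) / 2 := by
    rw [sum_comm, ← half]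
    simp only [mul_comm (p _) (p _)]
  simp only [hc, mul_add, sum_add_distrib, half, swapped, add_halves]

theorem expectation_chat_identity (K : ℕ) (hK : 1 ≤ K)
    (p : Fin K → ℝ) (hp : ∀ i, 0 < p i) (hps : ∑ i, p i = 1)
    (x : Fin K → ℝ)
    (c : Fin K → Fin K → Fin K → ℝ)
    (hc : ∀ i a b, c i a b = (if i = a then (1:ℝ) else 0) * (x a - x b) / (2 * p a)
                          + (if i = b then (1:ℝ) else 0) * (x b - x a) / (2 * p b))
    (i : Fin K) :
    ∑ a, ∑ b, p a * p b * c i a b = x i - ∑ j, p j * x j :=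
  expectation_chat_identity_general K p hp hps x c hc i
end

section
/- Let p be a probability vector on Fin K with p i ≥ γ/K for all i, where γ ∈ (0,1), and let ĉ : Fin K → ℝ satisfy ∑_i p i ĉ i = 0 and (γ/K)·ĉ i ≤ 1 for all i. Then ∑_i ((p i - γ/K)/(1-γ))·exp((γ/K) ĉ i) ≤ 1 + (γ²/K)/(1-γ)·((1/K)∑_i ĉ i)·(-1) + ((e-2)γ²/K)/(1-γ)·((1/K)∑_i p i ĉ i²). That is, W_{t+1}/W_t ≤ 1 - (γ²/K)/(1-γ)·M₁' + ((e-2)γ²/K)/(1-γ)·M₂ where M₁' = (1/K)∑_i ĉ i and M₂ = (1/K)∑_i p i ĉ i². -/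
/-!
With `η = γ / K`, the weights `(p i - η) / (1 - γ)` form a probability vector, so bounding each
`exp (η * c i)` by `1 + x + (e - 2) x²` (valid for `x ≤ 1`) reduces the claim to the first and
second moments of `η * c` under these weights. Since `∑ p c = 0` the first moment is `-η² ∑ c / (1 - γ)`, and dropping `-η` from the
weights bounds the second by `η² ∑ p c² / (1 - γ)`.
-/

open Finset Real

lemma exp_le_one_add_add_sq_div_two_of_nonpos {x : ℝ} (hx : x ≤ 0) :
    exp x ≤ 1 + x + x ^ 2 / 2 := by
  -- `exp (-x) ≥ 1 - x + x²/2` and `(1 - x + x²/2)(1 + x + x²/2) = 1 + x⁴/4 ≥ 1`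
  have hinv := quadratic_le_exp_of_nonneg (neg_nonneg.mpr hx)
  rw [exp_neg, le_inv_comm₀ (by nlinarith) (exp_pos x)] at hinv
  calc exp x ≤ (1 + -x + (-x) ^ 2 / 2)⁻¹ := hinv
    _ ≤ 1 + x + x ^ 2 / 2 := by
      rw [inv_le_iff_one_le_mul₀ (by nlinarith)]
      nlinarith [pow_nonneg (sq_nonneg x) 2]

lemma hasSum_exp_sub_one_sub (x : ℝ) :
    HasSum (fun n ↦ x ^ (n + 2) / (n + 2).factorial) (exp x - 1 - x) := by
  have h := (hasSum_nat_add_iff' 2).mpr (NormedSpace.expSeries_div_hasSum_exp x)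
  rw [← exp_eq_exp_ℝ] at h
  simpa [sum_range_succ, sub_sub] using h

lemma exp_le_one_add_add_mul_sq_of_nonneg {x : ℝ} (h0 : 0 ≤ x) (h1 : x ≤ 1) :
    exp x ≤ 1 + x + (exp 1 - 2) * x ^ 2 := by
  have htail := (hasSum_exp_sub_one_sub 1).mul_left (x ^ 2)
  have hle := hasSum_le (fun n ↦ ?_) (hasSum_exp_sub_one_sub x) htail
  · linarith
  · rw [one_pow, mul_one_div]
    exact div_le_div_of_nonneg_right (pow_le_pow_of_le_one h0 h1 (by omega)) (by positivity)

lemma exp_le_one_add_add_mul_sq {x : ℝ} (hx : x ≤ 1) :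
    exp x ≤ 1 + x + (exp 1 - 2) * x ^ 2 := by
  rcases le_total x 0 with hneg | hnonneg
  · have : (1 : ℝ) / 2 ≤ exp 1 - 2 := by linarith [exp_one_gt_d9]
    nlinarith [exp_le_one_add_add_sq_div_two_of_nonpos hneg, sq_nonneg x]
  · exact exp_le_one_add_add_mul_sq_of_nonneg hnonneg hx

lemma sum_mul_exp_le {ι : Type*} (s : Finset ι) {w x : ι → ℝ} (hw : ∀ i ∈ s, 0 ≤ w i)
    (hw1 : ∑ i ∈ s, w i = 1) (hx : ∀ i ∈ s, x i ≤ 1) :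
    ∑ i ∈ s, w i * exp (x i)
      ≤ 1 + ∑ i ∈ s, w i * x i + (exp 1 - 2) * ∑ i ∈ s, w i * x i ^ 2 := by
  calc ∑ i ∈ s, w i * exp (x i)
      ≤ ∑ i ∈ s, w i * (1 + x i + (exp 1 - 2) * x i ^ 2) :=
        sum_le_sum fun i hi ↦
          mul_le_mul_of_nonneg_left (exp_le_one_add_add_mul_sq (hx i hi)) (hw i hi)
    _ = _ := by
      simp only [mul_add, mul_one, sum_add_distrib, hw1, mul_sum]
      congr 1
      exact sum_congr rfl fun i _ ↦ by ring

lemma sum_sub_div_one_sub_eq_one {ι : Type*} [Fintype ι] [Nonempty ι] {p : ι → ℝ}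
    (hp : ∑ i, p i = 1) {γ : ℝ} (hγ : γ ≠ 1) :
    ∑ i, (p i - γ / Fintype.card ι) / (1 - γ) = 1 := by
  have hcard : (Fintype.card ι : ℝ) ≠ 0 := Nat.cast_ne_zero.mpr Fintype.card_ne_zero
  rw [← sum_div, sum_sub_distrib, hp, sum_const, card_univ, nsmul_eq_mul, mul_div_cancel₀ _ hcard,
    div_self (sub_ne_zero.mpr hγ.symm)]

theorem one_step_weight_growth (K : ℕ) (hK : 1 ≤ K)
    (γ : ℝ) (hγ : γ ∈ Set.Ioo (0:ℝ) 1)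
    (p : Fin K → ℝ) (hps : ∑ i, p i = 1) (hp : ∀ i, γ / K ≤ p i)
    (c : Fin K → ℝ)
    (hzero : ∑ i, p i * c i = 0)
    (hle : ∀ i, (γ / K) * c i ≤ 1) :
    ∑ i, ((p i - γ / K) / (1 - γ)) * Real.exp ((γ / K) * c i)
      ≤ 1 - (γ ^ 2 / K) / (1 - γ) * ((1 / K) * ∑ i, c i)
          + ((Real.exp 1 - 2) * γ ^ 2 / K) / (1 - γ) * ((1 / K) * ∑ i, p i * (c i) ^ 2) := by
  obtain ⟨hγ0, hγ1⟩ := hγ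
  have : NeZero K := ⟨by omega⟩
  have hK0 : (0 : ℝ) < K := by positivity
  have h1γ : 0 < 1 - γ := sub_pos.mpr hγ1
  set η := γ / K with hη
  have hw1 : ∑ i, (p i - η) / (1 - γ) = 1 := by
    simpa using sum_sub_div_one_sub_eq_one hps hγ1.ne
  have hlin : ∑ i, (p i - η) / (1 - γ) * (η * c i) = -(η ^ 2 / (1 - γ)) * ∑ i, c i := by
    have : ∀ i, (p i - η) / (1 - γ) * (η * c i) = η / (1 - γ) * (p i * c i) - η ^ 2 / (1 - γ) * c i :=
      fun i ↦ by ring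
    simp only [this, sum_sub_distrib, ← mul_sum, hzero]
    ring
  have hquad : ∑ i, (p i - η) / (1 - γ) * (η * c i) ^ 2 ≤ η ^ 2 / (1 - γ) * ∑ i, p i * c i ^ 2 := by
    rw [mul_sum]
    refine sum_le_sum fun i _ ↦ ?_
    calc (p i - η) / (1 - γ) * (η * c i) ^ 2 = η ^ 2 / (1 - γ) * ((p i - η) * c i ^ 2) := by ring
      _ ≤ η ^ 2 / (1 - γ) * (p i * c i ^ 2) := by
        gcongr
        exact sub_le_self _ (div_nonneg hγ0.le hK0.le)
  have hE : 0 ≤ exp 1 - 2 := by linarith [exp_one_gt_d9]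
  calc _ ≤ 1 + ∑ i, (p i - η) / (1 - γ) * (η * c i)
          + (exp 1 - 2) * ∑ i, (p i - η) / (1 - γ) * (η * c i) ^ 2 :=
        sum_mul_exp_le univ (fun i _ ↦ div_nonneg (sub_nonneg.mpr (hp i)) h1γ.le) hw1
          fun i _ ↦ hle i
    _ ≤ 1 - η ^ 2 / (1 - γ) * ∑ i, c i + (exp 1 - 2) * (η ^ 2 / (1 - γ) * ∑ i, p i * c i ^ 2) := by
        rw [hlin, neg_mul, ← sub_eq_add_neg]
        gcongr
    _ = _ := by
        rw [hη]
        field_simp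
end
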